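/- In any 1-discrete 2-fibration, every cartesian lift of an equivalence 1-cell in the base is itself an equivalence 1-cell in the total 2-category. -/

import Mathlib

open CategoryTheory CategoryTheory.Bicategory

namespace FOHL

variable (C : Type*) (B : Type*) [Bicategory C] [Bicategory.Strict C]
  [Bicategory B] [Bicategory.Strict B]

/-- A (strict) 2-functor between strict 2-categories: a functor on underlying 1-categories
together with an action on 2-cells, strictly compatible with vertical composition,
identities and whiskering. -/
structure TwoFunctor where
  toFunctor : C ⥤ B
  map₂ : ∀ {a b : C} {f g : a ⟶ b}, (f ⟶ g) → (toFunctor.map f ⟶ toFunctor.map g)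
  map₂_id : ∀ {a b : C} (f : a ⟶ b), map₂ (𝟙 f) = 𝟙 (toFunctor.map f)
  map₂_comp : ∀ {a b : C} {f g h : a ⟶ b} (η : f ⟶ g) (θ : g ⟶ h),
    map₂ (η ≫ θ) = map₂ η ≫ map₂ θ
  map₂_whiskerLeft : ∀ {a b c : C} (f : a ⟶ b) {g h : b ⟶ c} (η : g ⟶ h),
    map₂ (f ◁ η) = eqToHom (toFunctor.map_comp f g) ≫ (toFunctor.map f ◁ map₂ η) ≫
      eqToHom (toFunctor.map_comp f h).symm
  map₂_whiskerRight : ∀ {a b c : C} {f g : a ⟶ b} (η : f ⟶ g) (h : b ⟶ c),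
    map₂ (η ▷ h) = eqToHom (toFunctor.map_comp f h) ≫ (map₂ η ▷ toFunctor.map h) ≫
      eqToHom (toFunctor.map_comp g h).symm

variable {C B}

/-- Auxiliary inductive expressing that a 2-cell `η` of `C` lies over a 2-cell `θ` of `B`
with respect to the 2-functor `P` (cf. `CategoryTheory.IsHomLiftAux`). -/
inductive IsTwoCellLiftAux (P : TwoFunctor C B) :
    ∀ {R S : B} {u v : R ⟶ S}, (u ⟶ v) → ∀ {a b : C} {f g : a ⟶ b}, (f ⟶ g) → Prop
  | map {a b : C} {f g : a ⟶ b} (η : f ⟶ g) : IsTwoCellLiftAux P (P.map₂ η) η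

/-- The 2-cell `η` of `C` lies over the 2-cell `θ` of `B`. -/
def TwoFunctor.IsLift₂ (P : TwoFunctor C B) {R S : B} {u v : R ⟶ S} (θ : u ⟶ v)
    {a b : C} {f g : a ⟶ b} (η : f ⟶ g) : Prop :=
  IsTwoCellLiftAux P θ η

/-- `P` is a 1-discrete 2-fibration: the underlying functor of 1-categories is a Grothendieck
fibration and, for every 2-cell `α` of the base and every 1-cell lying over its domain, there
is a unique 2-cell lying over `α` with that 1-cell as domain. -/
structure TwoFunctor.Is1D2F (P : TwoFunctor C B) : Prop where
  fibered : P.toFunctor.IsFibered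
  lift₂ : ∀ {R S : B} {u v : R ⟶ S} (α : u ⟶ v) {a b : C} (m : a ⟶ b),
    P.toFunctor.IsHomLift u m →
      ∃! gη : Σ g' : a ⟶ b, m ⟶ g', P.IsLift₂ α gη.2

/-- A 1-cell in a (strict) 2-category is an equivalence if it admits a quasi-inverse. -/
def IsEquivalenceOneCell {a b : C} (f : a ⟶ b) : Prop :=
  ∃ g : b ⟶ a, Nonempty (𝟙 a ≅ f ≫ g) ∧ Nonempty (𝟙 b ≅ g ≫ f)

end FOHL

/-! Replace the quasi-inverse `g` of `f = P φ` by an adjoint one, with unit `η` and counit `ϵ`.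
Lifting `ϵ⁻¹ : 𝟙 ≅ g ≫ f` to a 2-isomorphism `δ : 𝟙 Y ≅ w` and factoring `w` through the
cartesian `φ` gives `ψ` over `g` with `𝟙 Y ≅ ψ ≫ φ`. Lifting `η` gives `γ : 𝟙 X ≅ v` with `v`
over `f ≫ g`. By the triangle identity `f ◁ ϵ⁻¹ = η ▷ f`, the 2-cells `γ ▷ φ` and `φ ◁ δ`
out of `φ` lie over the same 2-cell, so uniqueness of 2-cell lifts gives `v ≫ φ = φ ≫ ψ ≫ φ`,
and cartesianness of `φ` then gives `v = φ ≫ ψ`. -/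

open CategoryTheory CategoryTheory.Functor FOHL

namespace CategoryTheory.Bicategory

lemma whiskerLeft_inv_eq_of_leftZigzagIso {B : Type*} [Bicategory B] [Strict B]
    {a b : B} {f : a ⟶ b} {g : b ⟶ a} {η : 𝟙 a ≅ f ≫ g} {ϵ : g ≫ f ≅ 𝟙 b}
    (h : leftZigzagIso η ϵ = λ_ f ≪≫ (ρ_ f).symm) :
    f ◁ ϵ.inv = eqToHom (by simp) ≫ η.hom ▷ f ≫ eqToHom (Category.assoc f g f) := by
  have zigzag : η.hom ▷ f ≫ eqToHom (Category.assoc f g f) ≫ f ◁ ϵ.hom = eqToHom (by simp) := by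
    simpa [leftZigzag, bicategoricalComp, Strict.associator_eqToIso, Strict.leftUnitor_eqToIso,
      Strict.rightUnitor_eqToIso] using congrArg Iso.hom h
  rw [← cancel_mono (f ◁ ϵ.hom), ← whiskerLeft_comp, Iso.inv_hom_id, whiskerLeft_id,
    Category.assoc, Category.assoc, zigzag]
  simp

end CategoryTheory.Bicategory

namespace FOHL.TwoFunctor

variable {C B : Type*} [Bicategory C] [Bicategory.Strict C] [Bicategory B] [Bicategory.Strict B]
  (P : TwoFunctor C B)

lemma map₂_eqToHom {a b : C} {f g : a ⟶ b} (h : f = g) :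
    P.map₂ (eqToHom h) = eqToHom (congrArg P.toFunctor.map h) := by
  subst h; exact P.map₂_id f

lemma isLift₂_iff {a b : C} {f g : a ⟶ b} (η : f ⟶ g)
    {u v : P.toFunctor.obj a ⟶ P.toFunctor.obj b} (θ : u ⟶ v) :
    P.IsLift₂ θ η ↔ ∃ (hu : P.toFunctor.map f = u) (hv : P.toFunctor.map g = v),
      P.map₂ η = eqToHom hu ≫ θ ≫ eqToHom hv.symm := by
  constructor
  · have heq_of_isLift₂ : ∀ {R S : B} {u v : R ⟶ S} (θ : u ⟶ v), P.IsLift₂ θ η →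
        HEq (P.toFunctor.map f) u ∧ HEq (P.toFunctor.map g) v ∧ HEq (P.map₂ η) θ := by
      rintro _ _ _ _ _ ⟨⟩
      exact ⟨.rfl, .rfl, .rfl⟩
    intro h
    obtain ⟨hu, hv, hθ⟩ := heq_of_isLift₂ θ h
    obtain rfl := eq_of_heq hu
    obtain rfl := eq_of_heq hv
    exact ⟨rfl, rfl, by simpa using eq_of_heq hθ⟩
  · rintro ⟨rfl, rfl, h⟩
    simp only [eqToHom_refl, Category.id_comp, Category.comp_id] at h
    subst h
    exact .map η

variable {P}

namespace Is1D2F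

variable (hP : P.Is1D2F)
include hP

lemma exists_map₂_eq {a b : C} (m : a ⟶ b) {u : P.toFunctor.obj a ⟶ P.toFunctor.obj b}
    (θ : P.toFunctor.map m ⟶ u) :
    ∃ (n : a ⟶ b) (hn : P.toFunctor.map n = u) (δ : m ⟶ n),
      P.map₂ δ = θ ≫ eqToHom hn.symm := by
  obtain ⟨⟨n, δ⟩, hδ, -⟩ := hP.lift₂ θ m inferInstance
  obtain ⟨_, hn, hδθ⟩ := (P.isLift₂_iff δ θ).mp hδ
  exact ⟨n, hn, δ, by simpa using hδθ⟩

lemma sigma_eq_of_map₂_eq {a b : C} {m g₁ g₂ : a ⟶ b} (η₁ : m ⟶ g₁) (η₂ : m ⟶ g₂)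
    (h : P.toFunctor.map g₁ = P.toFunctor.map g₂) (H : P.map₂ η₁ ≫ eqToHom h = P.map₂ η₂) :
    (⟨g₁, η₁⟩ : Σ g, m ⟶ g) = ⟨g₂, η₂⟩ := by
  obtain ⟨_, -, huniq⟩ := hP.lift₂ (P.map₂ η₂) m inferInstance
  refine (huniq _ ((P.isLift₂_iff η₁ _).mpr ⟨rfl, h, ?_⟩)).trans (huniq ⟨g₂, η₂⟩ (.map η₂)).symm
  simp [← H]

lemma isIso_of_isIso_map₂ {a b : C} {m n : a ⟶ b} (δ : m ⟶ n) [IsIso (P.map₂ δ)] : IsIso δ := by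
  obtain ⟨n', hn', δ', hδ'⟩ := hP.exists_map₂_eq n (inv (P.map₂ δ))
  obtain ⟨rfl, hcomp⟩ := Sigma.mk.inj_iff.mp <| hP.sigma_eq_of_map₂_eq (δ ≫ δ') (𝟙 m) hn' (by
    simp [P.map₂_comp, P.map₂_id, hδ'])
  refine ⟨δ', eq_of_heq hcomp, ?_⟩
  have := hP.sigma_eq_of_map₂_eq (δ' ≫ δ) (𝟙 n) rfl (by simp [P.map₂_comp, P.map₂_id, hδ'])
  exact eq_of_heq (Sigma.mk.inj_iff.mp this).2

lemma exists_iso_map₂_eq {a b : C} (m : a ⟶ b) {u : P.toFunctor.obj a ⟶ P.toFunctor.obj b}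
    (θ : P.toFunctor.map m ≅ u) :
    ∃ (n : a ⟶ b) (hn : P.toFunctor.map n = u) (δ : m ≅ n),
      P.map₂ δ.hom = θ.hom ≫ eqToHom hn.symm := by
  obtain ⟨n, hn, δ, hδ⟩ := hP.exists_map₂_eq m θ.hom
  have : IsIso (P.map₂ δ) := by rw [hδ]; infer_instance
  have := hP.isIso_of_isIso_map₂ δ
  exact ⟨n, hn, asIso δ, hδ⟩

lemma exists_iso_comp_of_isStronglyCartesian {X Y : C} (φ : X ⟶ Y)
    [P.toFunctor.IsStronglyCartesian (P.toFunctor.map φ) φ]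
    {g : P.toFunctor.obj Y ⟶ P.toFunctor.obj X} (ϵ : 𝟙 _ ≅ g ≫ P.toFunctor.map φ) :
    ∃ (ψ : Y ⟶ X) (hψ : P.toFunctor.map ψ = g) (δ : 𝟙 Y ≅ ψ ≫ φ),
      P.map₂ δ.hom = eqToHom (P.toFunctor.map_id Y) ≫ ϵ.hom ≫
        eqToHom (by rw [P.toFunctor.map_comp, hψ]) := by
  obtain ⟨w, hw, δ, hδ⟩ := hP.exists_iso_map₂_eq (𝟙 Y) (eqToIso (P.toFunctor.map_id Y) ≪≫ ϵ)
  have : P.toFunctor.IsHomLift (g ≫ P.toFunctor.map φ) w := hw ▸ inferInstance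
  obtain ⟨ψ, ⟨hψ, hfac⟩, -⟩ :=
    IsStronglyCartesian.universal_property P.toFunctor (P.toFunctor.map φ) φ g _ rfl w
  refine ⟨ψ, (IsHomLift.eq_of_isHomLift _ g ψ).symm, δ ≪≫ eqToIso hfac.symm, ?_⟩
  simp [P.map₂_comp, hδ, map₂_eqToHom]

lemma isEquivalenceOneCell_of_isStronglyCartesian {X Y : C} (φ : X ⟶ Y)
    [P.toFunctor.IsStronglyCartesian (P.toFunctor.map φ) φ]
    {g : P.toFunctor.obj Y ⟶ P.toFunctor.obj X} (η : 𝟙 _ ≅ P.toFunctor.map φ ≫ g)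
    (ϵ : g ≫ P.toFunctor.map φ ≅ 𝟙 _)
    (htri : P.toFunctor.map φ ◁ ϵ.inv =
      eqToHom (by simp) ≫ η.hom ▷ P.toFunctor.map φ ≫ eqToHom (Category.assoc _ _ _)) :
    IsEquivalenceOneCell φ := by
  obtain ⟨ψ, hψ, δ, hδ⟩ := hP.exists_iso_comp_of_isStronglyCartesian φ ϵ.symm
  obtain ⟨v, hv, γ, hγ⟩ :=
    hP.exists_iso_map₂_eq (𝟙 X) (eqToIso (P.toFunctor.map_id X) ≪≫ η)
  have hvφ : v ≫ φ = (φ ≫ ψ) ≫ φ := by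
    refine congrArg Sigma.fst (hP.sigma_eq_of_map₂_eq
      (eqToHom (Category.id_comp φ).symm ≫ γ.hom ▷ φ)
      (eqToHom (Category.comp_id φ).symm ≫ φ ◁ δ.hom ≫ eqToHom (Category.assoc _ _ _).symm)
      (by simp [hv, hψ]) ?_)
    simp [P.map₂_comp, P.map₂_whiskerLeft, P.map₂_whiskerRight, map₂_eqToHom, hγ, hδ, htri]
  have : P.toFunctor.IsHomLift (P.toFunctor.map φ ≫ g) v := hv ▸ inferInstance
  have : P.toFunctor.IsHomLift (P.toFunctor.map φ ≫ g) (φ ≫ ψ) := by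
    rw [← hψ, ← P.toFunctor.map_comp]; infer_instance
  have hv_eq :=
    IsStronglyCartesian.ext P.toFunctor (P.toFunctor.map φ) φ (P.toFunctor.map φ ≫ g) hvφ
  exact ⟨ψ, ⟨γ ≪≫ eqToIso hv_eq⟩, ⟨δ⟩⟩

end Is1D2F

end FOHL.TwoFunctor

/-- In any 1-discrete 2-fibration, every cartesian lift of an equivalence
1-cell in the base is itself an equivalence 1-cell in the total 2-category. -/
theorem oneD2F_cartesian_lift_of_equivalence_isEquivalence
    {C B : Type*} [Bicategory C] [Bicategory.Strict C] [Bicategory B] [Bicategory.Strict B]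
    (P : TwoFunctor C B) (hP : P.Is1D2F)
    {A B₀ : B} (f : A ⟶ B₀) (hf : IsEquivalenceOneCell f)
    {X Y : C} (φ : X ⟶ Y) (hφ : P.toFunctor.IsStronglyCartesian f φ) :
    IsEquivalenceOneCell φ := by
  obtain rfl := IsHomLift.domain_eq P.toFunctor f φ
  obtain rfl := IsHomLift.codomain_eq P.toFunctor f φ
  obtain rfl := IsHomLift.eq_of_isHomLift P.toFunctor f φ
  obtain ⟨g, ⟨η⟩, ⟨ϵ⟩⟩ := hf
  exact hP.isEquivalenceOneCell_of_isStronglyCartesian φ η (adjointifyCounit η ϵ.symm)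
    (whiskerLeft_inv_eq_of_leftZigzagIso (adjointifyCounit_left_triangle η ϵ.symm))
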